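/- Assume n is even and SO(n,k,β) is friendly. Let k̄ be an algebraic closure of k and let A ∈ GL(n, k̄) satisfy Aᵀ·M̄·A = M̄. If for every X ∈ SO(n,k,β) there exists X' ∈ SO(n,k,β) with A⁻¹·ι(X)·A = ι(X'), then there exist α ∈ k nonzero and s ∈ k̄ with s² = ι(α) such that every entry of A is of the form c·s with c in the image of k; that is, A = s·ι(A₀) for some matrix A₀ ∈ M_n(k). -/

import Mathlib

open Matrix

/-!
For `n ≥ 3` a friendly `SO(n, k, β)` spans `Mₙ(k)`: products of two sign changes give the
diagonal matrix units, and cutting a rotation in the `(q, p)`-plane down with `E_pp` and `E_qq`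
gives `E_pq`. Conjugation by `A` is `k`-linear, so `A⁻¹ ι(X) A` is defined over `k` for every
`X ∈ Mₙ(k)`; for `X = E_ij` its `(r, t)` entry is `(A⁻¹)_ri A_jt`. Fixing a nonzero entry
`(A⁻¹)_ri` shows `A = s • ι(A₀)`, and then the `(i, i)` entry of `Aᵀ M̄ A = M̄` reads
`s² ι((A₀ᵀ M A₀)_ii) = ι(m_i) ≠ 0`, so `s²` lies in `k`.
-/

namespace Matrix

section Semiring

variable {n α : Type*} [Fintype n] [DecidableEq n] [Semiring α]

lemma diagonal_mul_single (d : n → α) (i j : n) (a : α) :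
    diagonal d * single i j a = single i j (d i * a) := by
  ext r s
  rw [diagonal_mul, single_apply, single_apply]
  split_ifs <;> simp_all

lemma single_mul_diagonal (d : n → α) (i j : n) (a : α) :
    single i j a * diagonal d = single i j (a * d j) := by
  ext r s
  rw [mul_diagonal, single_apply, single_apply]
  split_ifs <;> simp_all

end Semiring

section SpecialOrthogonal

variable {n k : Type*} [DecidableEq n]

section CommRing

variable [CommRing k]

def signFlip (a b : n) : Matrix n n k := diagonal fun u => if u = a ∨ u = b then -1 else 1

/-- On the coordinates `i, j` this is the block `!![x, -c * y; y, x]`. -/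
def planeRotation (i j : n) (x y c : k) : Matrix n n k :=
  1 + single i i (x - 1) + single j j (x - 1) + single j i y + single i j (-(c * y))

lemma planeRotation_apply_of_ne {i j : n} (hij : i ≠ j) (x y c : k) :
    planeRotation i j x y c j i = y := by
  simp [planeRotation, hij, hij.symm]

variable [Fintype n]

def specialOrthogonalSubmonoid (m : n → k) : Submonoid (Matrix n n k) where
  carrier := {X | Xᵀ * diagonal m * X = diagonal m ∧ X.det = 1}
  mul_mem' := by
    rintro X Y ⟨hX, hdX⟩ ⟨hY, hdY⟩
    refine ⟨?_, by rw [det_mul, hdX, hdY, one_mul]⟩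
    calc (X * Y)ᵀ * diagonal m * (X * Y) = Yᵀ * (Xᵀ * diagonal m * X) * Y := by
          simp only [transpose_mul, Matrix.mul_assoc]
      _ = diagonal m := by rw [hX, hY]
  one_mem' := by simp

lemma signFlip_mem_specialOrthogonalSubmonoid (m : n → k) {a b : n} (hab : a ≠ b) :
    signFlip a b ∈ specialOrthogonalSubmonoid m := by
  refine ⟨?_, ?_⟩
  · rw [signFlip, diagonal_transpose, diagonal_mul_diagonal, diagonal_mul_diagonal]
    congr 1
    ext u
    split_ifs <;> ring
  · rw [signFlip, det_diagonal, Finset.prod_ite, Finset.prod_const_one, mul_one,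
      Finset.prod_const, Finset.filter_or, Finset.filter_eq', Finset.filter_eq',
      if_pos (Finset.mem_univ a), if_pos (Finset.mem_univ b), Finset.singleton_union,
      Finset.card_pair hab]
    norm_num

lemma one_sub_signFlip_mul_one_sub_signFlip {a b c : n} (hab : a ≠ b) (hac : a ≠ c)
    (hbc : b ≠ c) :
    (1 - signFlip a b : Matrix n n k) * (1 - signFlip a c) = (4 : k) • single a a 1 := by
  rw [signFlip, signFlip, ← diagonal_one, diagonal_sub, diagonal_sub, diagonal_mul_diagonal,
    ← diagonal_single, ← diagonal_smul]
  congr 1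
  ext u
  simp only [Pi.smul_apply, Pi.single_apply, smul_eq_mul]
  split_ifs <;> simp_all
  norm_num

lemma planeRotation_orthogonal {i j : n} (hij : i ≠ j) {m : n → k} {x y c : k}
    (hc : m j = c * m i) (hxy : x ^ 2 + c * y ^ 2 = 1) :
    (planeRotation i j x y c)ᵀ * diagonal m * planeRotation i j x y c = diagonal m := by
  ext r s
  simp only [planeRotation, transpose_add, transpose_one, transpose_single, add_mul, mul_add,
    one_mul, mul_one, diagonal_mul_single, single_mul_diagonal, single_mul_single_same,
    single_mul_single_of_ne _ _ _ _ hij, single_mul_single_of_ne _ _ _ _ hij.symm, add_zero,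
    add_apply, single_apply, diagonal_apply]
  split_ifs <;> grind

end CommRing

variable [Field k] [Fintype n]

lemma planeRotation_eq_transvection_mul {i j : n} (hij : i ≠ j) {x y c : k} (hy : y ≠ 0)
    (hxy : x ^ 2 + c * y ^ 2 = 1) :
    planeRotation i j x y c =
      transvection i j ((x - 1) / y) * transvection j i y * transvection i j ((x - 1) / y) := by
  have hsplit : -(c * y) = (x - 1) / y + (x - 1) / y + (x - 1) * ((x - 1) / y) := by
    field_simp
    linear_combination -hxy
  simp only [transvection, planeRotation, add_mul, mul_add, one_mul, mul_one,
    single_mul_single_same, single_mul_single_of_ne _ _ _ _ hij.symm, add_zero]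
  rw [div_mul_cancel₀ _ hy, mul_div_cancel₀ _ hy, hsplit, single_add, single_add]
  abel

lemma det_planeRotation {i j : n} (hij : i ≠ j) {x y c : k} (hy : y ≠ 0)
    (hxy : x ^ 2 + c * y ^ 2 = 1) : (planeRotation i j x y c).det = 1 := by
  rw [planeRotation_eq_transvection_mul hij hy hxy, det_mul, det_mul,
    det_transvection_of_ne _ _ hij, det_transvection_of_ne _ _ hij.symm, one_mul, one_mul]

lemma planeRotation_mem_specialOrthogonalSubmonoid {m : n → k} {i j : n} (hij : i ≠ j)
    {x y c : k} (hy : y ≠ 0) (hc : m j = c * m i) (hxy : x ^ 2 + c * y ^ 2 = 1) :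
    planeRotation i j x y c ∈ specialOrthogonalSubmonoid m :=
  ⟨planeRotation_orthogonal hij hc hxy, det_planeRotation hij hy hxy⟩

lemma single_self_mem_adjoin_specialOrthogonalSubmonoid (hchar : (2 : k) ≠ 0)
    (hcard : 2 < Fintype.card n) (m : n → k) (a : n) :
    single a a (1 : k) ∈
      Algebra.adjoin k (specialOrthogonalSubmonoid m : Set (Matrix n n k)) := by
  set S := Algebra.adjoin k (specialOrthogonalSubmonoid m : Set (Matrix n n k))
  have hthird : ∀ i j : n, ∃ l, l ≠ i ∧ l ≠ j :=
    ENat.exists_ne_ne_of_three_le (by rw [ENat.card_eq_coe_fintype_card]; exact_mod_cast hcard)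
  obtain ⟨b, hba, -⟩ := hthird a a
  obtain ⟨c, hca, hcb⟩ := hthird a b
  have hflip : ∀ b, b ≠ a → 1 - signFlip a b ∈ S := fun b hb =>
    S.sub_mem S.one_mem (Algebra.subset_adjoin (signFlip_mem_specialOrthogonalSubmonoid m hb.symm))
  have h4 : (4 : k) ≠ 0 := by
    rw [show (4 : k) = 2 * 2 by norm_num]
    exact mul_ne_zero hchar hchar
  have h := S.smul_mem (S.mul_mem (hflip b hba) (hflip c hca)) (4 : k)⁻¹
  rwa [one_sub_signFlip_mul_one_sub_signFlip hba.symm hca.symm hcb.symm, smul_smul,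
    inv_mul_cancel₀ h4, one_smul] at h

lemma single_mem_adjoin_specialOrthogonalSubmonoid_of_ne (hchar : (2 : k) ≠ 0)
    (hcard : 2 < Fintype.card n) {m : n → k} {p q : n} (hpq : p ≠ q) (hmq : m q ≠ 0)
    (hfriendly : ∃ x y : k, y ≠ 0 ∧ x ^ 2 + (m p / m q) * y ^ 2 = 1) :
    single p q (1 : k) ∈
      Algebra.adjoin k (specialOrthogonalSubmonoid m : Set (Matrix n n k)) := by
  set S := Algebra.adjoin k (specialOrthogonalSubmonoid m : Set (Matrix n n k))
  obtain ⟨x, y, hy, hxy⟩ := hfriendly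
  have hR : planeRotation q p x y (m p / m q) ∈ S := Algebra.subset_adjoin
    (planeRotation_mem_specialOrthogonalSubmonoid hpq.symm hy (div_mul_cancel₀ _ hmq).symm hxy)
  have h := S.smul_mem (S.mul_mem (S.mul_mem
    (single_self_mem_adjoin_specialOrthogonalSubmonoid hchar hcard m p) hR)
    (single_self_mem_adjoin_specialOrthogonalSubmonoid hchar hcard m q)) y⁻¹
  rwa [single_mul_mul_single, planeRotation_apply_of_ne hpq.symm, one_mul, mul_one, smul_single,
    smul_eq_mul, inv_mul_cancel₀ hy] at h

theorem span_specialOrthogonalSubmonoid_eq_top (hchar : (2 : k) ≠ 0)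
    (hcard : 2 < Fintype.card n) {m : n → k} (hm : ∀ u, m u ≠ 0)
    (hfriendly : ∀ s t : n, ∃ x y : k, y ≠ 0 ∧ x ^ 2 + (m s / m t) * y ^ 2 = 1) :
    Submodule.span k (specialOrthogonalSubmonoid m : Set (Matrix n n k)) = ⊤ := by
  rw [← Submonoid.closure_eq (specialOrthogonalSubmonoid m), ← Algebra.adjoin_eq_span,
    Algebra.toSubmodule_eq_top, eq_top_iff]
  intro X _
  rw [matrix_eq_sum_single X]
  refine Subalgebra.sum_mem _ fun p _ => Subalgebra.sum_mem _ fun q _ => ?_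
  rw [← mul_one (X p q), ← smul_eq_mul, ← smul_single]
  refine Subalgebra.smul_mem _ ?_ _
  rcases eq_or_ne p q with rfl | hpq
  · exact single_self_mem_adjoin_specialOrthogonalSubmonoid hchar hcard m p
  · exact single_mem_adjoin_specialOrthogonalSubmonoid_of_ne hchar hcard hpq (hm q)
      (hfriendly p q)

end SpecialOrthogonal

section Descent

variable {n k K : Type*} [Fintype n]

lemma exists_mul_map_mul_eq_map_of_mem_span [CommSemiring k] [Semiring K] [Algebra k K]
    {B A : Matrix n n K} {s : Set (Matrix n n k)}
    (hs : ∀ X ∈ s,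
      ∃ Y : Matrix n n k, B * X.map (algebraMap k K) * A = Y.map (algebraMap k K))
    {X : Matrix n n k} (hX : X ∈ Submodule.span k s) :
    ∃ Y : Matrix n n k, B * X.map (algebraMap k K) * A = Y.map (algebraMap k K) := by
  induction hX using Submodule.span_induction with
  | mem X hX => exact hs X hX
  | zero => exact ⟨0, by simp⟩
  | add X Z _ _ hX hZ =>
    obtain ⟨X', hX'⟩ := hX
    obtain ⟨Z', hZ'⟩ := hZ
    refine ⟨X' + Z', ?_⟩
    rw [Matrix.map_add _ (map_add _), Matrix.map_add _ (map_add _), Matrix.mul_add,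
      Matrix.add_mul, hX', hZ']
  | smul c X _ hX =>
    obtain ⟨X', hX'⟩ := hX
    refine ⟨c • X', ?_⟩
    have hmap : ∀ Z : Matrix n n k,
        (c • Z).map (algebraMap k K) = c • Z.map (algebraMap k K) :=
      Matrix.map_smul _ c fun a => by rw [smul_eq_mul, map_mul, Algebra.smul_def]
    rw [hmap, hmap, Matrix.mul_smul, Matrix.smul_mul, hX']

lemma exists_eq_smul_map_of_mul_single_mul_eq_map [DecidableEq n] [CommSemiring k] [Field K]
    [Algebra k K] {B A : Matrix n n K} (hB : B ≠ 0)
    (h : ∀ i j, ∃ Y : Matrix n n k,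
      B * (single i j 1 : Matrix n n k).map (algebraMap k K) * A = Y.map (algebraMap k K)) :
    ∃ s : K, ∃ C : Matrix n n k, A = s • C.map (algebraMap k K) := by
  obtain ⟨r, i, hri⟩ : ∃ r i, B r i ≠ 0 := by
    by_contra! h0
    exact hB (Matrix.ext h0)
  choose Y hY using h
  refine ⟨(B r i)⁻¹, Matrix.of fun j t => Y i j r t, ?_⟩
  ext j t
  have hentry : B r i * A j t = algebraMap k K (Y i j r t) := by
    rw [← Matrix.map_apply (f := algebraMap k K), ← hY i j]
    simp [Matrix.mul_apply, single_apply, ite_and, Finset.sum_ite_eq]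
  rw [Matrix.smul_apply, Matrix.map_apply, of_apply, ← hentry, smul_eq_mul,
    inv_mul_cancel_left₀ hri]

lemma exists_sq_eq_algebraMap_of_smul_map_orthogonal [Field k] [Field K] [Algebra k K]
    {M C : Matrix n n k} {s : K} {i : n} (hMi : M i i ≠ 0)
    (h : (s • C.map (algebraMap k K))ᵀ * M.map (algebraMap k K) *
      (s • C.map (algebraMap k K)) = M.map (algebraMap k K)) :
    ∃ α : k, α ≠ 0 ∧ s ^ 2 = algebraMap k K α := by
  set t := (Cᵀ * M * C) i i
  have hentry : s ^ 2 * algebraMap k K t = algebraMap k K (M i i) := by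
    rw [Matrix.transpose_smul, Matrix.smul_mul, Matrix.mul_smul, Matrix.smul_mul, smul_smul,
      ← transpose_map, ← Matrix.map_mul, ← Matrix.map_mul, ← sq] at h
    have := congrFun (congrFun h i) i
    rwa [Matrix.smul_apply, Matrix.map_apply, Matrix.map_apply, smul_eq_mul] at this
  have ht : t ≠ 0 := by
    rintro h0
    rw [h0, map_zero, mul_zero, eq_comm, map_eq_zero] at hentry
    exact hMi hentry
  refine ⟨M i i / t, div_ne_zero hMi ht, ?_⟩
  rw [map_div₀, eq_div_iff ((map_ne_zero _).mpr ht), hentry]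

end Descent

end Matrix

theorem inn_invariant_so_even_entries_general {k K : Type*} [Field k] [Field K] [Algebra k K]
    (hchar : (2 : k) ≠ 0) {n : ℕ} (hn : 2 < n)
    (M : Matrix (Fin n) (Fin n) k) (hMdiag : M.IsDiag) (hM : IsUnit M)
    (hfriendly : ∀ s t : Fin n, ∃ x y : k, y ≠ 0 ∧ x ^ 2 + (M s s / M t t) * y ^ 2 = 1)
    (A : Matrix (Fin n) (Fin n) K) (hA : IsUnit A)
    (hAorth : Aᵀ * M.map (algebraMap k K) * A = M.map (algebraMap k K))
    (hinv : ∀ X : Matrix (Fin n) (Fin n) k, Xᵀ * M * X = M → X.det = 1 →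
      ∃ X' : Matrix (Fin n) (Fin n) k, X'ᵀ * M * X' = M ∧ X'.det = 1 ∧
        A⁻¹ * X.map (algebraMap k K) * A = X'.map (algebraMap k K)) :
    ∃ α : k, α ≠ 0 ∧ ∃ s : K, s ^ 2 = algebraMap k K α ∧
      ∃ A₀ : Matrix (Fin n) (Fin n) k, A = s • A₀.map (algebraMap k K) := by
  obtain ⟨m, rfl⟩ : ∃ m, M = diagonal m := ⟨M.diag, hMdiag.diagonal_diag.symm⟩
  have hm : ∀ u, m u ≠ 0 := fun u => (Pi.isUnit_iff.mp (isUnit_diagonal.mp hM) u).ne_zero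
  have hspan := span_specialOrthogonalSubmonoid_eq_top hchar (by rwa [Fintype.card_fin]) hm
    (by simpa using hfriendly)
  have hconj : ∀ X : Matrix (Fin n) (Fin n) k, ∃ Y : Matrix (Fin n) (Fin n) k,
      A⁻¹ * X.map (algebraMap k K) * A = Y.map (algebraMap k K) :=
    fun X => exists_mul_map_mul_eq_map_of_mem_span
      (fun X hX => (hinv X hX.1 hX.2).imp fun _ h => h.2.2) (hspan ▸ Submodule.mem_top)
  have i₀ : Fin n := ⟨0, by omega⟩
  have : Nonempty (Fin n) := ⟨i₀⟩
  obtain ⟨s, A₀, rfl⟩ := exists_eq_smul_map_of_mul_single_mul_eq_map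
    (isUnit_nonsing_inv_iff.mpr hA).ne_zero fun i j => hconj _
  obtain ⟨α, hα, hs⟩ := exists_sq_eq_algebraMap_of_smul_map_orthogonal
    (i := i₀) (by simpa using hm i₀) hAorth
  exact ⟨α, hα, s, hs, A₀, rfl⟩

/-- When `n` is even and `A ∈ O(n, k̄, β)` is such that `Inn_A` leaves `SO(n,k,β)`
invariant, every entry of `A` is a `k`-multiple of a fixed square root `s` of some
nonzero `α ∈ k`. -/
theorem inn_invariant_so_even_entries {k K : Type*} [Field k] [Field K] [Algebra k K]
    [IsAlgClosure k K]
    (hchar : (2 : k) ≠ 0) {n : ℕ} (hn : 2 < n) (heven : Even n)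
    (M : Matrix (Fin n) (Fin n) k) (hMdiag : M.IsDiag) (hM : IsUnit M)
    (hfriendly : ∀ s t : Fin n, ∃ x y : k, y ≠ 0 ∧ x ^ 2 + (M s s / M t t) * y ^ 2 = 1)
    (A : Matrix (Fin n) (Fin n) K) (hA : IsUnit A)
    (hAorth : Aᵀ * M.map (algebraMap k K) * A = M.map (algebraMap k K))
    (hinv : ∀ X : Matrix (Fin n) (Fin n) k, Xᵀ * M * X = M → X.det = 1 →
      ∃ X' : Matrix (Fin n) (Fin n) k, X'ᵀ * M * X' = M ∧ X'.det = 1 ∧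
        A⁻¹ * X.map (algebraMap k K) * A = X'.map (algebraMap k K)) :
    ∃ α : k, α ≠ 0 ∧ ∃ s : K, s ^ 2 = algebraMap k K α ∧
      ∃ A₀ : Matrix (Fin n) (Fin n) k, A = s • A₀.map (algebraMap k K) :=
  inn_invariant_so_even_entries_general hchar hn M hMdiag hM hfriendly A hA hAorth hinv
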